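/- In minimal propositional logic extended by the axiom scheme A → T(A), if S is a proposition with T(¬S) → S derivable, then ¬¬S is derivable. -/
import Mathlib

/-- Propositional formulas built from variables and ⊥ using ∧, ∨, →. -/
inductive Fm : Type
  | var : ℕ → Fm
  | bot : Fm
  | and : Fm → Fm → Fm
  | or : Fm → Fm → Fm
  | imp : Fm → Fm → Fm
deriving DecidableEq

/-- ¬A is defined as A → ⊥. -/
def Fm.neg (A : Fm) : Fm := A.imp .bot

/-- Hilbert-style derivability in minimal propositional logic (intuitionistic
logic without ex falso quodlibet), extended by an extra set `Ax` of axioms. -/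
inductive Deriv (Ax : Fm → Prop) : Fm → Prop
  | ax {A} : Ax A → Deriv Ax A
  | k (A B : Fm) : Deriv Ax (A.imp (B.imp A))
  | s (A B C : Fm) : Deriv Ax ((A.imp (B.imp C)).imp ((A.imp B).imp (A.imp C)))
  | andI (A B : Fm) : Deriv Ax (A.imp (B.imp (A.and B)))
  | andE1 (A B : Fm) : Deriv Ax ((A.and B).imp A)
  | andE2 (A B : Fm) : Deriv Ax ((A.and B).imp B)
  | orI1 (A B : Fm) : Deriv Ax (A.imp (A.or B))
  | orI2 (A B : Fm) : Deriv Ax (B.imp (A.or B))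
  | orE (A B C : Fm) : Deriv Ax ((A.imp C).imp ((B.imp C).imp ((A.or B).imp C)))
  | mp {A B : Fm} : Deriv Ax (A.imp B) → Deriv Ax A → Deriv Ax B

/-- Identity combinator. -/
lemma Deriv.id (Ax : Fm → Prop) (A : Fm) : Deriv Ax (A.imp A) :=
  .mp (.mp (.s A (A.imp A) A) (.k A (A.imp A))) (.k A A)

/-- with the scheme A → T(A), if T(¬S) → S is derivable
then ¬¬S is derivable. -/
theorem stmt1 (T : Fm → Fm) (Ax : Fm → Prop)
    (hT1 : ∀ A : Fm, Deriv Ax (A.imp (T A)))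
    (S : Fm)
    (hS : Deriv Ax ((T S.neg).imp S)) :
    Deriv Ax S.neg.neg := by
  -- ¬S → T(¬S) → S, so ¬S → S
  have h1 : Deriv Ax (S.neg.imp S) :=
    .mp (.mp (.s S.neg (T S.neg) S) (.mp (.k _ _) hS)) (hT1 S.neg)
  -- ¬S → (S → ⊥) is identity
  have h2 : Deriv Ax (S.neg.imp (S.imp .bot)) := Deriv.id Ax S.neg
  exact .mp (.mp (.s S.neg S .bot) h2) h1
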